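/- arXiv:1011.1754 — 4 statements merged into one kernel-verified Lean document; each statement's English description precedes it below -/
import Mathlib

section
/- For every positive integer r, the function E_r(t) = (2/r)(Γ((r+1)/2)/Γ(r/2))^2 Σ_{k=0}^∞ [(1·3···(2k−1))^2/((2·4···2k)((r+2)···(r+2k)))] t^{2k+1} satisfies E_r(1) = 1. -/
open Real Finset

/-- The `k`-th Taylor coefficient of the function `E_r` (up to the global factor). -/
noncomputable def grCoef (r k : ℕ) : ℝ :=
  (∏ i ∈ Finset.range k, (2 * (i : ℝ) + 1)) ^ 2 /
    ((∏ i ∈ Finset.range k, (2 * (i : ℝ) + 2)) *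
      (∏ i ∈ Finset.range k, ((r : ℝ) + 2 * (i : ℝ) + 2)))

/-- The function `E_r` from the matrix Grothendieck identity. -/
noncomputable def Er (r : ℕ) (t : ℝ) : ℝ :=
  (2 / (r : ℝ)) * (Real.Gamma (((r : ℝ) + 1) / 2) / Real.Gamma ((r : ℝ) / 2)) ^ 2 *
    ∑' k : ℕ, grCoef r k * t ^ (2 * k + 1)

/-!
The coefficient `grCoef r k` is the `k`-th coefficient `(1/2)ₖ² / ((r/2 + 1)ₖ k!)` of
`₂F₁(1/2, 1/2; r/2 + 1; ·)`, so `Er r 1` is the prefactor times a hypergeometric series at `1`.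
Gauss's theorem `₂F₁(a, b; c; 1) = Γ(c) Γ(c - a - b) / (Γ(c - a) Γ(c - b))` sums it to
`Γ(r/2 + 1) Γ(r/2) / Γ((r + 1)/2)²`, which is exactly the inverse of the prefactor.

For `a, b > 0`, Gauss's theorem follows by writing `(b)ₖ / (c)ₖ` as a Beta integral against
`xᵏ`, summing the binomial series `∑ (a)ₖ / k! xᵏ = (1 - x)^(-a)` under the integral sign, and
evaluating the resulting Beta integral. All terms are nonnegative, so the series dominates itself
and dominated convergence justifies the interchange.
-/

open MeasureTheory
open scoped Nat

lemma ofReal_rpow_mul_one_sub_rpow {u v x : ℝ} (hx : x ∈ Set.Icc (0 : ℝ) 1) :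
    ((x ^ (u - 1) * (1 - x) ^ (v - 1) : ℝ) : ℂ) =
      (x : ℂ) ^ ((u : ℂ) - 1) * (1 - (x : ℂ)) ^ ((v : ℂ) - 1) := by
  push_cast [Complex.ofReal_cpow hx.1, Complex.ofReal_cpow (sub_nonneg.2 hx.2)]
  rfl

lemma intervalIntegrable_rpow_mul_one_sub_rpow {u v : ℝ} (hu : 0 < u) (hv : 0 < v) :
    IntervalIntegrable (fun x : ℝ => x ^ (u - 1) * (1 - x) ^ (v - 1)) volume 0 1 := by
  refine (Complex.betaIntegral_convergent (u := u) (v := v) (by simpa) (by simpa)).norm.congr_uIoo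
    fun x hx => ?_
  rw [Set.uIoo_of_le zero_le_one] at hx
  dsimp only
  rw [← ofReal_rpow_mul_one_sub_rpow (Set.Ioo_subset_Icc_self hx), Complex.norm_real,
    Real.norm_of_nonneg (mul_nonneg (rpow_nonneg hx.1.le _) (rpow_nonneg (by linarith [hx.2]) _))]

lemma integral_rpow_mul_one_sub_rpow {u v : ℝ} (hu : 0 < u) (hv : 0 < v) :
    ∫ x in (0 : ℝ)..1, x ^ (u - 1) * (1 - x) ^ (v - 1) = Gamma u * Gamma v / Gamma (u + v) := by
  have h := Complex.betaIntegral_eq_Gamma_mul_div u v (by simpa) (by simpa)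
  rw [Complex.betaIntegral, ← Complex.ofReal_add, Complex.Gamma_ofReal, Complex.Gamma_ofReal,
    Complex.Gamma_ofReal, ← intervalIntegral.integral_congr fun x hx =>
      ofReal_rpow_mul_one_sub_rpow (by rwa [Set.uIcc_of_le zero_le_one] at hx),
    intervalIntegral.integral_ofReal] at h
  exact_mod_cast h

lemma Real.Gamma_add_nat_eq_ascPochhammer_mul {b : ℝ} (hb : ∀ k : ℕ, b ≠ -k) (n : ℕ) :
    Gamma (b + n) = (ascPochhammer ℝ n).eval b * Gamma b := by
  induction n with
  | zero => simp
  | succ n ih =>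
    rw [Nat.cast_succ, ← add_assoc, Real.Gamma_add_one fun h => hb n (by linarith), ih,
      ascPochhammer_succ_eval]
    ring

lemma hasSum_ascPochhammer_div_factorial_mul_pow (a : ℝ) {x : ℝ} (hx : |x| < 1) :
    HasSum (fun k => (ascPochhammer ℝ k).eval a / k ! * x ^ k) ((1 - x) ^ (-a)) := by
  have h := (Real.one_div_one_sub_rpow_hasFPowerSeriesOnBall_zero a).hasSum
    (y := x) (by simpa [enorm_eq_nnnorm, ← Real.norm_eq_abs, ← NNReal.coe_lt_coe] using hx)
  simp only [FormalMultilinearSeries.ofScalars_apply_eq, zero_add, smul_eq_mul] at h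
  have hchoose (k : ℕ) : (ascPochhammer ℝ k).eval a / k ! = Ring.choose (a + k - 1) k := by
    rw [← Ring.multichoose_eq, ← Polynomial.ascPochhammer_smeval_eq_eval,
      ← Ring.factorial_nsmul_multichoose_eq_ascPochhammer, nsmul_eq_mul]
    field_simp
  simp_rw [hchoose, rpow_neg (by linarith [le_abs_self x] : 0 ≤ 1 - x), ← one_div]
  exact h

lemma hasSum_integral_ascPochhammer_div_factorial_mul_pow_mul {a : ℝ} (ha : 0 < a) {g : ℝ → ℝ}
    (hg_nonneg : ∀ x ∈ Set.Ioo (0 : ℝ) 1, 0 ≤ g x) (hg_int : IntervalIntegrable g volume 0 1)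
    (hwg_int : IntervalIntegrable (fun x => (1 - x) ^ (-a) * g x) volume 0 1) :
    HasSum (fun k => ∫ x in (0 : ℝ)..1, (ascPochhammer ℝ k).eval a / k ! * x ^ k * g x)
      (∫ x in (0 : ℝ)..1, (1 - x) ^ (-a) * g x) := by
  have hIoo : ∀ᵐ x ∂volume, x ∈ Set.uIoc (0 : ℝ) 1 → x ∈ Set.Ioo (0 : ℝ) 1 := by
    filter_upwards [Measure.ae_ne volume 1] with x hx1 hx
    rw [Set.uIoc_of_le zero_le_one] at hx
    exact ⟨hx.1, lt_of_le_of_ne hx.2 hx1⟩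
  have hlim (x : ℝ) (hx : x ∈ Set.Ioo (0 : ℝ) 1) :
      HasSum (fun k => (ascPochhammer ℝ k).eval a / k ! * x ^ k * g x) ((1 - x) ^ (-a) * g x) :=
    (hasSum_ascPochhammer_div_factorial_mul_pow a
      (abs_lt.2 ⟨by linarith [hx.1], hx.2⟩)).mul_right (g x)
  have hnonneg (k : ℕ) (x : ℝ) (hx : x ∈ Set.Ioo (0 : ℝ) 1) :
      0 ≤ (ascPochhammer ℝ k).eval a / k ! * x ^ k * g x :=
    mul_nonneg (mul_nonneg (div_nonneg (ascPochhammer_pos k a ha).le (by positivity))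
      (pow_nonneg hx.1.le k)) (hg_nonneg x hx)
  refine intervalIntegral.hasSum_integral_of_dominated_convergence
    (fun k x => (ascPochhammer ℝ k).eval a / k ! * x ^ k * g x) (fun k => ?_) (fun k => ?_)
    ?_ ?_ ?_
  · exact (hg_int.continuousOn_mul (by fun_prop)).def'.aestronglyMeasurable
  · filter_upwards [hIoo] with x hx hx'
    exact (Real.norm_of_nonneg (hnonneg k x (hx hx'))).le
  · filter_upwards [hIoo] with x hx hx'
    exact (hlim x (hx hx')).summable
  · exact hwg_int.congr_uIoo fun x hx =>
      ((hlim x (by rwa [Set.uIoo_of_le zero_le_one] at hx)).tsum_eq).symm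
  · filter_upwards [hIoo] with x hx hx'
    exact hlim x (hx hx')

lemma ordinaryHypergeometricCoefficient_eq_integral (a : ℝ) {b c : ℝ} (hb : 0 < b) (hbc : b < c)
    (k : ℕ) :
    ordinaryHypergeometricCoefficient a b c k = Gamma c / (Gamma b * Gamma (c - b)) *
      ∫ x in (0 : ℝ)..1, (ascPochhammer ℝ k).eval a / k ! * x ^ k *
        (x ^ (b - 1) * (1 - x) ^ (c - b - 1)) := by
  have hc : 0 < c := hb.trans hbc
  have hcb : 0 < c - b := by linarith
  have hbeta : ∫ x in (0 : ℝ)..1, x ^ k * (x ^ (b - 1) * (1 - x) ^ (c - b - 1)) =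
      Gamma (b + k) * Gamma (c - b) / Gamma (c + k) := by
    rw [show c + k = (b + k) + (c - b) by ring,
      ← integral_rpow_mul_one_sub_rpow (by positivity) hcb]
    refine intervalIntegral.integral_congr_uIoo fun x hx => ?_
    rw [Set.uIoo_of_le zero_le_one] at hx
    rw [show b + k - 1 = (b - 1) + k by ring, rpow_add_natCast hx.1.ne']
    ring
  simp_rw [mul_assoc _ (_ ^ k), intervalIntegral.integral_const_mul, hbeta,
    Real.Gamma_add_nat_eq_ascPochhammer_mul fun k => ((neg_nonpos.2 k.cast_nonneg).trans_lt hb).ne',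
    Real.Gamma_add_nat_eq_ascPochhammer_mul fun k => ((neg_nonpos.2 k.cast_nonneg).trans_lt hc).ne']
  have := (Gamma_pos_of_pos hb).ne'
  have := (Gamma_pos_of_pos hc).ne'
  have := (Gamma_pos_of_pos hcb).ne'
  have := (ascPochhammer_pos k c hc).ne'
  field_simp

theorem hasSum_ordinaryHypergeometricCoefficient {a b c : ℝ} (ha : 0 < a) (hb : 0 < b)
    (habc : a + b < c) :
    HasSum (ordinaryHypergeometricCoefficient a b c)
      (Gamma c * Gamma (c - a - b) / (Gamma (c - a) * Gamma (c - b))) := by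
  have hcb : 0 < c - b := by linarith
  have hcab : 0 < c - a - b := by linarith
  have hweight : Set.EqOn (fun x : ℝ => x ^ (b - 1) * (1 - x) ^ (c - a - b - 1))
      (fun x => (1 - x) ^ (-a) * (x ^ (b - 1) * (1 - x) ^ (c - b - 1))) (Set.uIoo 0 1) := by
    intro x hx
    rw [Set.uIoo_of_le zero_le_one] at hx
    dsimp only
    rw [mul_left_comm, ← rpow_add (by linarith [hx.2])]
    ring_nf
  have hlimit : ∫ x in (0 : ℝ)..1, (1 - x) ^ (-a) * (x ^ (b - 1) * (1 - x) ^ (c - b - 1)) =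
      Gamma b * Gamma (c - a - b) / Gamma (c - a) := by
    rw [← intervalIntegral.integral_congr_uIoo hweight, integral_rpow_mul_one_sub_rpow hb hcab,
      show b + (c - a - b) = c - a by ring]
  have h := hasSum_integral_ascPochhammer_div_factorial_mul_pow_mul ha
    (fun x hx => mul_nonneg (rpow_nonneg hx.1.le _) (rpow_nonneg (by linarith [hx.2]) _))
    (intervalIntegrable_rpow_mul_one_sub_rpow hb hcb)
    ((intervalIntegrable_rpow_mul_one_sub_rpow hb hcab).congr_uIoo hweight)
  rw [hlimit] at h
  have := (Gamma_pos_of_pos hb).ne'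
  rw [funext (ordinaryHypergeometricCoefficient_eq_integral a hb (by linarith)),
    show Gamma c * Gamma (c - a - b) / (Gamma (c - a) * Gamma (c - b)) =
      Gamma c / (Gamma b * Gamma (c - b)) * (Gamma b * Gamma (c - a - b) / Gamma (c - a)) by
    field_simp]
  exact h.mul_left _

lemma ascPochhammer_eval_eq_prod_range {S : Type*} [CommSemiring S] (s : S) (n : ℕ) :
    (ascPochhammer S n).eval s = ∏ i ∈ range n, (s + i) := by
  induction n with
  | zero => simp
  | succ n ih => rw [ascPochhammer_succ_eval, ih, prod_range_succ]

lemma prod_range_two_mul_add (s : ℝ) (n : ℕ) :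
    ∏ i ∈ range n, (2 * (i : ℝ) + s) = 2 ^ n * (ascPochhammer ℝ n).eval (s / 2) := by
  rw [ascPochhammer_eval_eq_prod_range, ← card_range n, ← prod_const, card_range,
    ← prod_mul_distrib]
  exact prod_congr rfl fun i _ => by ring

lemma grCoef_eq_ordinaryHypergeometricCoefficient (r k : ℕ) :
    grCoef r k = ordinaryHypergeometricCoefficient (1 / 2) (1 / 2) ((r : ℝ) / 2 + 1) k := by
  have hr : ∏ i ∈ range k, ((r : ℝ) + 2 * i + 2) = ∏ i ∈ range k, (2 * (i : ℝ) + (r + 2)) :=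
    prod_congr rfl fun i _ => by ring
  rw [grCoef, hr, prod_range_two_mul_add, prod_range_two_mul_add, prod_range_two_mul_add,
    div_self two_ne_zero, ascPochhammer_eval_one, add_div, div_self two_ne_zero]
  have := (ascPochhammer_pos k ((r : ℝ) / 2 + 1) (by positivity)).ne'
  simp only [ordinaryHypergeometricCoefficient]
  field_simp

/-- For every positive integer `r`, `E_r(1) = 1`. -/
theorem Er_one (r : ℕ) (hr : 1 ≤ r) : Er r 1 = 1 := by
  have hr' : (0 : ℝ) < r := by exact_mod_cast hr
  have hsum := hasSum_ordinaryHypergeometricCoefficient (a := 1 / 2) (b := 1 / 2)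
    (c := (r : ℝ) / 2 + 1) (by norm_num) (by norm_num) (by linarith)
  rw [← funext (grCoef_eq_ordinaryHypergeometricCoefficient r),
    show (r : ℝ) / 2 + 1 - 1 / 2 - 1 / 2 = r / 2 by ring,
    show (r : ℝ) / 2 + 1 - 1 / 2 = (r + 1) / 2 by ring,
    Gamma_add_one (by positivity)] at hsum
  have hA := (Gamma_pos_of_pos (show 0 < ((r : ℝ) + 1) / 2 by positivity)).ne'
  have hB := (Gamma_pos_of_pos (show 0 < (r : ℝ) / 2 by positivity)).ne'
  simp only [Er, one_pow, mul_one, hsum.tsum_eq]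
  field_simp
end

section
/- For every integer r ≥ 2 and z in [−1,1], E_r(z) = (2(r−1)Γ((r+1)/2)/(Γ(1/2)Γ(r/2))) ∫_0^{π/2} cos^{r−2}θ · sinθ · arcsin(z sinθ) dθ. -/
open Real Finset intervalIntegral

/-!
Expand `arcsin` in its Taylor series `∑ (2k-1)!!/(2k)!! · x^(2k+1)/(2k+1)`, obtained by integrating
the binomial series of `(1 - t²)^(-1/2)` term by term, and integrate against `cos^(r-2) θ sin θ`
term by term as well: the coefficients are summable because the partial sums at `x < 1` stay below
`arcsin x ≤ π/2`. The `k`-th term becomes the Wallis integral `∫ cos^(r-2) sin^(2k+2)`; integrating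
by parts shows that its recursion in `k` is exactly the ratio of consecutive coefficients of `E_r`,
and the normalisation comes from `∫₀^{π/2} cos^n = √π Γ((n+1)/2) / (2 Γ((n+2)/2))`.
-/

open MeasureTheory Filter Topology
open scoped Interval

theorem hasSum_intervalIntegral_of_summable_bound {ι E : Type*} [Countable ι]
    [NormedAddCommGroup E] [NormedSpace ℝ E] {a b : ℝ} {f : ι → ℝ → E} {g : ℝ → E}
    {u : ι → ℝ} (hf : ∀ n, Continuous (f n)) (hbound : ∀ n, ∀ t ∈ Ι a b, ‖f n t‖ ≤ u n)
    (hu : Summable u) (hg : ∀ᵐ t, t ∈ Ι a b → HasSum (fun n => f n t) (g t)) :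
    HasSum (fun n => ∫ t in a..b, f n t) (∫ t in a..b, g t) :=
  hasSum_integral_of_dominated_convergence (fun n _ => u n)
    (fun n => (hf n).aestronglyMeasurable) (fun n => .of_forall (hbound n))
    (.of_forall fun _ _ => hu) intervalIntegrable_const hg

noncomputable def invSqrtCoeff (k : ℕ) : ℝ :=
  (∏ i ∈ range k, (2 * (i : ℝ) + 1)) / ∏ i ∈ range k, (2 * (i : ℝ) + 2)

theorem invSqrtCoeff_nonneg (k : ℕ) : 0 ≤ invSqrtCoeff k := by
  unfold invSqrtCoeff; positivity

theorem invSqrtCoeff_succ (k : ℕ) :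
    invSqrtCoeff (k + 1) = invSqrtCoeff k * ((2 * k + 1) / (2 * k + 2)) := by
  rw [invSqrtCoeff, invSqrtCoeff, prod_range_succ, prod_range_succ, div_mul_div_comm]

theorem multichoose_one_half_eq_invSqrtCoeff (n : ℕ) :
    Ring.multichoose (1 / 2 : ℝ) n = invSqrtCoeff n := by
  have key : (n.factorial : ℝ) * invSqrtCoeff n = (ascPochhammer ℝ n).eval (1 / 2) := by
    induction n with
    | zero => simp [invSqrtCoeff]
    | succ n ih =>
      rw [ascPochhammer_succ_eval, ← ih, invSqrtCoeff_succ, Nat.factorial_succ]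
      push_cast
      field_simp
      ring
  have h := Ring.factorial_nsmul_multichoose_eq_ascPochhammer (1 / 2 : ℝ) n
  rw [Polynomial.ascPochhammer_smeval_eq_eval, nsmul_eq_mul] at h
  exact mul_left_cancel₀ (by positivity) (h.trans key.symm)

theorem hasSum_invSqrtCoeff_mul_pow {y : ℝ} (hy : |y| < 1) :
    HasSum (fun k => invSqrtCoeff k * y ^ k) (√(1 - y))⁻¹ := by
  have h := (one_div_one_sub_rpow_hasFPowerSeriesOnBall_zero (1 / 2)).hasSum
    (y := y) (by simpa [Real.enorm_eq_ofReal_abs] using hy)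
  simp only [FormalMultilinearSeries.ofScalars_apply_eq, smul_eq_mul, zero_add,
    ← Ring.multichoose_eq, multichoose_one_half_eq_invSqrtCoeff] at h
  rwa [sqrt_eq_rpow, ← one_div]

theorem hasSum_arcsin {x : ℝ} (hx : |x| < 1) :
    HasSum (fun k => invSqrtCoeff k / (2 * k + 1) * x ^ (2 * k + 1)) (arcsin x) := by
  have habs : ∀ t ∈ Set.uIcc 0 x, |t| < 1 := fun t ht =>
    (by simpa using Set.abs_sub_left_of_mem_uIcc ht : |t| ≤ |x|).trans_lt hx
  have hint := hasSum_intervalIntegral_of_summable_bound (a := 0) (b := x)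
    (f := fun k t => invSqrtCoeff k * t ^ (2 * k)) (g := fun t => (√(1 - t ^ 2))⁻¹)
    (u := fun k => invSqrtCoeff k * (x ^ 2) ^ k) (fun k => by fun_prop)
    (fun k t ht => by
      have htx : t ^ 2 ≤ x ^ 2 := sq_le_sq.2
        (by simpa using Set.abs_sub_left_of_mem_uIcc (Set.uIoc_subset_uIcc ht))
      rw [pow_mul, norm_of_nonneg (mul_nonneg (invSqrtCoeff_nonneg k) (by positivity))]
      exact mul_le_mul_of_nonneg_left (pow_le_pow_left₀ (sq_nonneg t) htx k)
        (invSqrtCoeff_nonneg k))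
    (hasSum_invSqrtCoeff_mul_pow (y := x ^ 2) (by simpa [abs_pow] using hx)).summable
    (.of_forall fun t ht => by
      simpa [pow_mul] using hasSum_invSqrtCoeff_mul_pow (y := t ^ 2)
        (by simpa [abs_pow] using habs t (Set.uIoc_subset_uIcc ht)))
  have harcsin : ∫ t in (0 : ℝ)..x, (√(1 - t ^ 2))⁻¹ = arcsin x := by
    rw [integral_eq_sub_of_hasDerivAt (f := arcsin), arcsin_zero, sub_zero]
    · intro t ht
      have := abs_lt.1 (habs t ht)
      simpa using hasDerivAt_arcsin (by linarith) (by linarith)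
    · refine ContinuousOn.intervalIntegrable (ContinuousOn.inv₀ (by fun_prop) fun t ht => ?_)
      have := abs_lt.1 (habs t ht)
      exact (sqrt_pos.2 (by nlinarith)).ne'
  have hterm : ∀ k : ℕ, ∫ t in (0 : ℝ)..x, invSqrtCoeff k * t ^ (2 * k)
      = invSqrtCoeff k / (2 * k + 1) * x ^ (2 * k + 1) := fun k => by
    rw [intervalIntegral.integral_const_mul, integral_pow]
    push_cast
    ring
  simpa only [hterm, harcsin] using hint

theorem summable_invSqrtCoeff_div : Summable fun k : ℕ => invSqrtCoeff k / (2 * k + 1) := by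
  set a : ℕ → ℝ := fun k => invSqrtCoeff k / (2 * k + 1)
  have ha : ∀ k, 0 ≤ a k := fun k => div_nonneg (invSqrtCoeff_nonneg k) (by positivity)
  refine summable_of_sum_range_le (c := π / 2) ha fun n => ?_
  have hcont : Continuous fun x : ℝ => ∑ k ∈ range n, a k * x ^ (2 * k + 1) := by fun_prop
  have hlim := (hcont.tendsto 1).mono_left (nhdsWithin_le_nhds (s := Set.Iio 1))
  simp only [one_pow, mul_one] at hlim
  refine le_of_tendsto hlim ?_
  filter_upwards [Ioo_mem_nhdsLT zero_lt_one] with x hx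
  calc ∑ k ∈ range n, a k * x ^ (2 * k + 1)
      ≤ arcsin x := sum_le_hasSum (range n) (fun k _ => mul_nonneg (ha k) (pow_nonneg hx.1.le _))
        (hasSum_arcsin (abs_lt.2 ⟨by linarith [hx.1], hx.2⟩))
    _ ≤ π / 2 := arcsin_le_pi_div_two x

noncomputable def wallisIntegral (p q : ℕ) : ℝ := ∫ θ in (0 : ℝ)..π / 2, cos θ ^ p * sin θ ^ q

theorem wallisIntegral_add_two (p q : ℕ) :
    wallisIntegral p (q + 2) = ((q : ℝ) + 1) / (p + q + 2) * wallisIntegral p q := by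
  have hderiv : ∀ θ ∈ [[(0 : ℝ), π / 2]], HasDerivAt (fun θ => cos θ ^ (p + 1) * sin θ ^ (q + 1))
      (((q : ℝ) + 1) * (cos θ ^ p * sin θ ^ q)
        - ((p : ℝ) + q + 2) * (cos θ ^ p * sin θ ^ (q + 2))) θ := by
    intro θ _
    refine (((hasDerivAt_cos θ).fun_pow (p + 1)).mul
      ((hasDerivAt_sin θ).fun_pow (q + 1))).congr_deriv ?_
    have := sin_sq_add_cos_sq θ
    push_cast
    linear_combination ((q : ℝ) + 1) * cos θ ^ p * sin θ ^ q * this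
  have hint :=
    integral_eq_sub_of_hasDerivAt hderiv (by apply Continuous.intervalIntegrable; fun_prop)
  rw [intervalIntegral.integral_sub (by apply Continuous.intervalIntegrable; fun_prop)
    (by apply Continuous.intervalIntegrable; fun_prop), intervalIntegral.integral_const_mul,
    intervalIntegral.integral_const_mul] at hint
  simp only [cos_pi_div_two, sin_zero, ne_eq, Nat.add_one_ne_zero, not_false_eq_true, zero_pow,
    zero_mul, mul_zero, sub_zero] at hint
  rw [wallisIntegral, wallisIntegral]
  field_simp
  linarith

theorem Gamma_add_two_div_two {a : ℝ} (ha : 0 < a) :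
    Gamma ((a + 2) / 2) = a / 2 * Gamma (a / 2) := by
  rw [show (a + 2) / 2 = a / 2 + 1 by ring, Gamma_add_one (by positivity)]

theorem integral_cos_pow_eq_Gamma (n : ℕ) : ∫ θ in (0 : ℝ)..π / 2, cos θ ^ n
    = √π * Gamma ((n + 1) / 2) / (2 * Gamma ((n + 2) / 2)) := by
  induction n using Nat.twoStepInduction with
  | zero => norm_num [Gamma_one_half_eq, mul_self_sqrt pi_pos.le]
  | one =>
    have := Gamma_add_two_div_two one_pos
    norm_num [Gamma_one_half_eq] at this ⊢
    rw [this]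
    field_simp
  | more n ih _ =>
    rw [integral_cos_pow, ih]
    push_cast
    rw [show (n : ℝ) + 2 + 1 = n + 1 + 2 by ring, show (n : ℝ) + 2 + 2 = n + 2 + 2 by ring,
      Gamma_add_two_div_two (a := n + 1) (by positivity),
      Gamma_add_two_div_two (a := n + 2) (by positivity)]
    simp only [cos_pi_div_two, sin_zero, ne_eq, Nat.add_one_ne_zero, not_false_eq_true, zero_pow,
      zero_mul, mul_zero, sub_zero, zero_div, zero_add]
    field_simp

theorem wallisIntegral_two (p : ℕ) :
    wallisIntegral p 2 = √π * Gamma ((p + 1) / 2) / (2 * (p + 2) * Gamma ((p + 2) / 2)) := by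
  have h := wallisIntegral_add_two p 0
  simp only [wallisIntegral, pow_zero, mul_one, zero_add, Nat.cast_zero, add_zero,
    integral_cos_pow_eq_Gamma] at h
  rw [wallisIntegral, h]
  field_simp

theorem hasSum_integral_cos_pow_mul_sin_mul_arcsin (p : ℕ) {z : ℝ} (hz : |z| ≤ 1) :
    HasSum
      (fun k => invSqrtCoeff k / (2 * k + 1) * wallisIntegral p (2 * k + 2) * z ^ (2 * k + 1))
      (∫ θ in (0 : ℝ)..π / 2, cos θ ^ p * sin θ * arcsin (z * sin θ)) := by
  set c : ℕ → ℝ := fun k => invSqrtCoeff k / (2 * k + 1)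
  have hc : ∀ k, 0 ≤ c k := fun k => div_nonneg (invSqrtCoeff_nonneg k) (by positivity)
  have hzsin : ∀ θ, |z * sin θ| ≤ 1 := fun θ => by
    rw [abs_mul]; exact mul_le_one₀ hz (abs_nonneg _) (abs_sin_le_one θ)
  have h := hasSum_intervalIntegral_of_summable_bound (a := 0) (b := π / 2)
    (f := fun k θ => cos θ ^ p * sin θ * (c k * (z * sin θ) ^ (2 * k + 1)))
    (g := fun θ => cos θ ^ p * sin θ * arcsin (z * sin θ)) (u := c) (fun k => by fun_prop)
    (fun k θ _ => ?bound) summable_invSqrtCoeff_div ?sum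
  case bound =>
    have hcs : ‖cos θ ^ p * sin θ‖ ≤ 1 := by
      rw [norm_mul, norm_pow]
      exact mul_le_one₀ (pow_le_one₀ (norm_nonneg _) (abs_cos_le_one θ)) (norm_nonneg _)
        (abs_sin_le_one θ)
    rw [norm_mul _ (c k * _), norm_mul (c k), norm_of_nonneg (hc k), norm_pow]
    calc _ ≤ c k * ‖z * sin θ‖ ^ (2 * k + 1) :=
          mul_le_of_le_one_left (mul_nonneg (hc k) (by positivity)) hcs
      _ ≤ c k := mul_le_of_le_one_right (hc k) (pow_le_one₀ (norm_nonneg _) (hzsin θ))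
  case sum =>
    -- off the null set `{π / 2}` we have `|sin θ| < 1`, inside the radius of the arcsine series
    filter_upwards [measure_eq_zero_iff_ae_notMem.1 (measure_singleton (π / 2))] with θ hne hθ
    rw [Set.uIoc_of_le (by positivity)] at hθ
    have hcos : 0 < cos θ := cos_pos_of_mem_Ioo
      ⟨by linarith [hθ.1, pi_pos], lt_of_le_of_ne hθ.2 hne⟩
    have hsin : |sin θ| < 1 := by
      rw [← sq_lt_one_iff_abs_lt_one]; nlinarith [sin_sq_add_cos_sq θ]
    have hzs : |z * sin θ| < 1 := by
      rw [abs_mul]; exact (mul_le_of_le_one_left (abs_nonneg _) hz).trans_lt hsin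
    exact (hasSum_arcsin hzs).mul_left _
  have hterm : ∀ k : ℕ,
      ∫ θ in (0 : ℝ)..π / 2, cos θ ^ p * sin θ * (c k * (z * sin θ) ^ (2 * k + 1))
        = c k * wallisIntegral p (2 * k + 2) * z ^ (2 * k + 1) := fun k => by
    rw [wallisIntegral, ← intervalIntegral.integral_const_mul,
      ← intervalIntegral.integral_mul_const]
    congr 1 with θ
    ring
  simpa only [hterm] using h

theorem grCoef_succ (r k : ℕ) : grCoef r (k + 1)
    = grCoef r k * ((2 * k + 1) ^ 2 / ((2 * k + 2) * (r + 2 * k + 2))) := by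
  simp only [grCoef, prod_range_succ]
  field_simp

theorem invSqrtCoeff_div_mul_wallisIntegral (p k : ℕ) :
    invSqrtCoeff k / (2 * k + 1) * wallisIntegral p (2 * k + 2)
      = wallisIntegral p 2 * grCoef (p + 2) k := by
  induction k with
  | zero => simp [invSqrtCoeff, grCoef]
  | succ k ih =>
    rw [grCoef_succ, ← mul_assoc, ← ih, show 2 * (k + 1) + 2 = 2 * k + 2 + 2 by ring,
      wallisIntegral_add_two, invSqrtCoeff_succ]
    push_cast
    field_simp
    ring

/-- Integral representation of `E_r` for `r ≥ 2` on `[−1,1]`. -/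
theorem Er_integral_repr (r : ℕ) (hr : 2 ≤ r) (z : ℝ) (hz : z ∈ Set.Icc (-1 : ℝ) 1) :
    Er r z
      = (2 * ((r : ℝ) - 1) * Real.Gamma (((r : ℝ) + 1) / 2) /
          (Real.Gamma (1 / 2) * Real.Gamma ((r : ℝ) / 2))) *
        ∫ θ in (0 : ℝ)..(π / 2),
          Real.cos θ ^ (r - 2) * Real.sin θ * Real.arcsin (z * Real.sin θ) := by
  obtain ⟨p, rfl⟩ := Nat.exists_eq_add_of_le' hr
  rw [Nat.add_sub_cancel, ← (hasSum_integral_cos_pow_mul_sin_mul_arcsin p (abs_le.2 hz)).tsum_eq]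
  simp_rw [invSqrtCoeff_div_mul_wallisIntegral, mul_assoc, tsum_mul_left, Er, ← mul_assoc]
  congr 1
  rw [wallisIntegral_two]
  push_cast
  rw [show (p : ℝ) + 2 + 1 = p + 1 + 2 by ring, Gamma_add_two_div_two (by positivity),
    Gamma_one_half_eq]
  field_simp
  ring
end

section
/- Let λ ≥ 2, J the all-ones |V|×|V| matrix, and Z a positive semidefinite |V|×|V| matrix with Z(u,u) = λ−1 on the diagonal and Z(u,v) = −1 for edges. Define A = (λ−1)(J+Z)/(2λ) and B = ((λ−1)J − Z)/(2λ). Then the 2|V|×2|V| block matrix U = [[A,B],[B,A]] is positive semidefinite. -/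
/-!
Conjugating by the Hadamard matrix `[[1, 1], [1, -1]]` shows that `[[S + D, S - D], [S - D, S + D]]`
is positive semidefinite whenever `S` and `D` are. Here `S = (A + B) / 2` is a nonnegative
combination of `J` and `Z` (the coefficient of `Z` is `(λ - 2) / (4λ)`), and `D = (A - B) / 2 = Z / 4`.
-/

open Matrix

theorem fromRows_mul_mul_conjTranspose_fromRows {m n R : Type*} [Fintype n] [Fintype m]
    [Semiring R] [StarRing R] (A₁ A₂ : Matrix m n R) (M : Matrix n n R) :
    fromRows A₁ A₂ * M * (fromRows A₁ A₂)ᴴ =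
      fromBlocks (A₁ * M * A₁ᴴ) (A₁ * M * A₂ᴴ) (A₂ * M * A₁ᴴ) (A₂ * M * A₂ᴴ) := by
  rw [conjTranspose_fromRows_eq_fromCols_conjTranspose, fromRows_mul, fromRows_mul_fromCols]

theorem posSemidef_fromBlocks_add_sub {n R : Type*} [Fintype n] [CommRing R] [PartialOrder R]
    [StarRing R] [StarOrderedRing R] {S D : Matrix n n R} (hS : S.PosSemidef) (hD : D.PosSemidef) :
    (fromBlocks (S + D) (S - D) (S - D) (S + D)).PosSemidef := by
  classical
  have h : fromBlocks (S + D) (S - D) (S - D) (S + D) =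
      fromRows (1 : Matrix n n R) 1 * S * (fromRows (1 : Matrix n n R) 1)ᴴ +
        fromRows (1 : Matrix n n R) (-1) * D * (fromRows (1 : Matrix n n R) (-1))ᴴ := by
    simp only [fromRows_mul_mul_conjTranspose_fromRows, conjTranspose_one, conjTranspose_neg,
      Matrix.one_mul, Matrix.mul_one, Matrix.neg_mul, Matrix.mul_neg, neg_neg, fromBlocks_add,
      sub_eq_add_neg]
  rw [h]
  exact (hS.mul_mul_conjTranspose_same _).add (hD.mul_mul_conjTranspose_same _)

theorem posSemidef_of_forall_apply_eq_one {n R : Type*} [Fintype n] [CommRing R] [PartialOrder R]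
    [StarRing R] [StarOrderedRing R] {J : Matrix n n R} (hJ : ∀ u v, J u v = 1) :
    J.PosSemidef := by
  have hJ_eq : J = vecMulVec 1 (star 1) := by ext u v; simp [hJ, vecMulVec_apply]
  exact hJ_eq ▸ posSemidef_vecMulVec_self_star 1

theorem block_matrix_posSemidef_general {V : Type*} [Fintype V]
    (lam : ℝ) (hlam : 2 ≤ lam) (Z : Matrix V V ℝ) (hZ : Z.PosSemidef)
    (J : Matrix V V ℝ) (hJ : ∀ u v, J u v = 1)
    (A B : Matrix V V ℝ)
    (hA : A = (2 * lam)⁻¹ • ((lam - 1) • (J + Z)))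
    (hB : B = (2 * lam)⁻¹ • ((lam - 1) • J - Z)) :
    (Matrix.fromBlocks A B B A).PosSemidef := by
  set S := ((lam - 1) / (2 * lam)) • J + ((lam - 2) / (4 * lam)) • Z
  set D := (4 : ℝ)⁻¹ • Z
  have hlam0 : lam ≠ 0 := by positivity
  have hA_eq : A = S + D := by
    subst hA
    ext u v
    simp only [S, D, Matrix.add_apply, Matrix.smul_apply, smul_eq_mul]
    field_simp
    ring
  have hB_eq : B = S - D := by
    subst hB
    ext u v
    simp only [S, D, Matrix.add_apply, Matrix.sub_apply, Matrix.smul_apply, smul_eq_mul]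
    field_simp
    ring
  have hS : S.PosSemidef :=
    ((posSemidef_of_forall_apply_eq_one hJ).smul (by bound)).add (hZ.smul (by bound))
  rw [hA_eq, hB_eq]
  exact posSemidef_fromBlocks_add_sub hS (hZ.smul (by norm_num))

/-- Let `λ ≥ 2`, `J` the all-ones matrix, and `Z` positive semidefinite with `Z(u,u) = λ − 1`
and `Z(u,v) = −1` on edges. With `A = (λ−1)(J+Z)/(2λ)` and `B = ((λ−1)J − Z)/(2λ)`, the
block matrix `U = [[A,B],[B,A]]` is positive semidefinite. -/
theorem block_matrix_posSemidef {V : Type*} [Fintype V] (G : SimpleGraph V)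
    (lam : ℝ) (hlam : 2 ≤ lam) (Z : Matrix V V ℝ) (hZ : Z.PosSemidef)
    (hdiag : ∀ u, Z u u = lam - 1) (hedge : ∀ u v, G.Adj u v → Z u v = -1)
    (J : Matrix V V ℝ) (hJ : ∀ u v, J u v = 1)
    (A B : Matrix V V ℝ)
    (hA : A = (2 * lam)⁻¹ • ((lam - 1) • (J + Z)))
    (hB : B = (2 * lam)⁻¹ • ((lam - 1) • J - Z)) :
    (Matrix.fromBlocks A B B A).PosSemidef :=
  block_matrix_posSemidef_general lam hlam Z hZ J hJ A B hA hB
end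

section
/- Let G be a finite graph with at least one edge, λ = ϑ(Ḡ), and s,t : V → R^{2|V|} be vectors obtained from the Gram decomposition in Lemma 4.2's proof (with U as above). Then: s(u)·t(u) = 0 for all u; s(u)·s(u) = t(u)·t(u) = (λ−1)/2 for all u; s(u)·s(v) = t(u)·t(v) = 0 for edges {u,v}; and s(u)·t(v) = s(v)·t(u) = 1/2 for edges {u,v}. -/
/-!
The paper's vectors are Gram vectors of `U = [[A, B], [B, A]]`. Conjugating by
`[[1, 1], [1, -1]]` block-diagonalises `U` into `A + B` and `A - B`, so it suffices that
`A + B = ((λ-1)/λ) J + ((λ-2)/(2λ)) Z` and `A - B = Z / 2` are positive semidefinite; this holds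
because an edge forces `λ ≥ 2` (test `Z` against `e_u + e_v`). The required inner products are then
the entries of `A` and `B` on the diagonal and on edges.
-/

open Finset Matrix

section GramVectors

variable {V : Type*} [Fintype V]

open scoped MatrixOrder in
theorem Matrix.PosSemidef.exists_gram_vectors {A : Matrix V V ℝ} (hA : A.PosSemidef) :
    ∃ p : V → V → ℝ, ∀ u v, p u ⬝ᵥ p v = A u v := by
  classical
  obtain ⟨P, hP⟩ := CStarAlgebra.nonneg_iff_eq_star_mul_self.mp hA.nonneg
  refine ⟨fun u i => P i u, fun u v => ?_⟩
  rw [hP]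
  simp [dotProduct, Matrix.mul_apply]

theorem Matrix.PosSemidef.sum_entries_pair_nonneg {Z : Matrix V V ℝ}
    (hZ : Z.PosSemidef) (u v : V) : 0 ≤ Z u u + Z u v + Z v u + Z v v := by
  classical
  have h := hZ.dotProduct_mulVec_nonneg (Pi.single u 1 + Pi.single v 1)
  simp [mulVec_add, dotProduct_add, add_dotProduct] at h
  linarith

theorem exists_gram_vectors_of_posSemidef_add_sub {A B : Matrix V V ℝ}
    (hadd : (A + B).PosSemidef) (hsub : (A - B).PosSemidef) :
    ∃ s t : V → V ⊕ V → ℝ, ∀ u v,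
      s u ⬝ᵥ s v = A u v ∧ t u ⬝ᵥ t v = A u v ∧ s u ⬝ᵥ t v = B u v := by
  obtain ⟨p, hp⟩ := (hadd.smul (show (0 : ℝ) ≤ 1 / 2 by norm_num)).exists_gram_vectors
  obtain ⟨q, hq⟩ := (hsub.smul (show (0 : ℝ) ≤ 1 / 2 by norm_num)).exists_gram_vectors
  refine ⟨fun u => Sum.elim (p u) (q u), fun u => Sum.elim (p u) (-q u), fun u v => ?_⟩
  simp only [dotProduct] at hp hq ⊢
  simp only [Fintype.sum_sum_type, Sum.elim_inl, Sum.elim_inr, Pi.neg_apply, mul_neg,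
    neg_mul, neg_neg, sum_neg_distrib, hp, hq, Matrix.smul_apply, Matrix.add_apply,
    Matrix.sub_apply, smul_eq_mul]
  refine ⟨?_, ?_, ?_⟩ <;> ring

end GramVectors

/-- For a graph `G` with at least one edge and a feasible solution `Z` of the semidefinite
program defining `ϑ(Ḡ)` with value `λ`, there are vectors `s(u), t(u) ∈ ℝ^(2|V|)` such that
`s(u)·t(u) = 0`, `s(u)·s(u) = t(u)·t(u) = (λ−1)/2`, and for edges `{u,v}`:
`s(u)·s(v) = t(u)·t(v) = 0` and `s(u)·t(v) = s(v)·t(u) = 1/2`. -/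
theorem exists_st_vectors {V : Type*} [Fintype V] (G : SimpleGraph V)
    (hE : ∃ u v, G.Adj u v)
    (lam : ℝ) (Z : Matrix V V ℝ) (hZ : Z.PosSemidef)
    (hdiag : ∀ u, Z u u = lam - 1) (hedge : ∀ u v, G.Adj u v → Z u v = -1) :
    ∃ s t : V → (V ⊕ V → ℝ),
      (∀ u, ∑ i, s u i * t u i = 0) ∧
      (∀ u, ∑ i, s u i * s u i = (lam - 1) / 2) ∧
      (∀ u, ∑ i, t u i * t u i = (lam - 1) / 2) ∧
      (∀ u v, G.Adj u v → ∑ i, s u i * s v i = 0) ∧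
      (∀ u v, G.Adj u v → ∑ i, t u i * t v i = 0) ∧
      (∀ u v, G.Adj u v → ∑ i, s u i * t v i = 1 / 2) ∧
      (∀ u v, G.Adj u v → ∑ i, s v i * t u i = 1 / 2) := by
  have hlam : 2 ≤ lam := by
    obtain ⟨u, v, huv⟩ := hE
    have := hZ.sum_entries_pair_nonneg u v
    rw [hdiag, hdiag, hedge u v huv, hedge v u huv.symm] at this
    linarith
  let A : Matrix V V ℝ := .of fun u v => (lam - 1) * (1 + Z u v) / (2 * lam)
  let B : Matrix V V ℝ := .of fun u v => (lam - 1 - Z u v) / (2 * lam)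
  have hadd : A + B = ((lam - 1) / lam) • vecMulVec 1 (star 1) + ((lam - 2) / (2 * lam)) • Z := by
    ext u v
    simp only [A, B, Matrix.add_apply, of_apply, Matrix.smul_apply, vecMulVec_apply, star_trivial,
      Pi.one_apply, smul_eq_mul, mul_one]
    field_simp
    ring
  have hsub : A - B = (1 / 2 : ℝ) • Z := by
    ext u v
    simp only [A, B, Matrix.sub_apply, of_apply, Matrix.smul_apply, smul_eq_mul]
    field_simp
    ring
  obtain ⟨s, t, hst⟩ := exists_gram_vectors_of_posSemidef_add_sub
    (hadd ▸ ((posSemidef_vecMulVec_self_star 1).smul (by bound)).add (hZ.smul (by bound)))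
    (hsub ▸ hZ.smul (by norm_num))
  have hA_diag (u : V) : A u u = (lam - 1) / 2 := by
    simp only [A, of_apply, hdiag]
    field_simp
    ring
  have hB_diag (u : V) : B u u = 0 := by simp [B, hdiag]
  have hA_edge (u v : V) (huv : G.Adj u v) : A u v = 0 := by simp [A, hedge u v huv]
  have hB_edge (u v : V) (huv : G.Adj u v) : B u v = 1 / 2 := by
    simp only [B, of_apply, hedge u v huv]
    field_simp
    ring
  exact ⟨s, t, fun u => (hst u u).2.2.trans (hB_diag u), fun u => (hst u u).1.trans (hA_diag u),
    fun u => (hst u u).2.1.trans (hA_diag u),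
    fun u v huv => (hst u v).1.trans (hA_edge u v huv),
    fun u v huv => (hst u v).2.1.trans (hA_edge u v huv),
    fun u v huv => (hst u v).2.2.trans (hB_edge u v huv),
    fun u v huv => (hst v u).2.2.trans (hB_edge v u huv.symm)⟩
end
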